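/- Suppose V = V_1 ⊔ … ⊔ V_k is a partition into nonempty sets such that whenever i ≠ j, every vertex of V_i is adjacent in G to every vertex of V_j. Then for x ∈ [0,1]^V, x ∈ R(G) if and only if 𝕶_{G,V'}(x) > 0 for every j ∈ {1,…,k} and every subset V' ⊆ V_j; that is, R(G) is the product of the corresponding regions for the induced subgraphs on V_1, …, V_k. (Lemma 4.7, second claim.) -/

import Mathlib

open scoped Classical ENNReal

set_option linter.unusedSectionVars false

variable {V : Type*} [Fintype V] [DecidableEq V]

/-- An admissible swap exchanges two consecutive letters that are adjacent in `G`. -/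
def AdjSwap (G : SimpleGraph V) (w w' : List V) : Prop :=
  ∃ (a b : List V) (u v : V), G.Adj u v ∧ w = a ++ u :: v :: b ∧ w' = a ++ v :: u :: b

/-- Two words are equivalent if one can be transformed into the other by finitely many
admissible swaps. -/
def WordEquiv (G : SimpleGraph V) : List V → List V → Prop :=
  Relation.ReflTransGen (AdjSwap G)

lemma adjSwap_symm (G : SimpleGraph V) : Symmetric (AdjSwap G) := by
  rintro w w' ⟨a, b, u, v, h, rfl, rfl⟩
  exact ⟨a, b, v, u, h.symm, rfl, rfl⟩

/-- The setoid of words modulo admissible swaps. -/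
def wordSetoid (G : SimpleGraph V) : Setoid (List V) where
  r := WordEquiv G
  iseqv := ⟨fun _ => Relation.ReflTransGen.refl,
    fun h => by
      change Relation.ReflTransGen (AdjSwap G) _ _ at h ⊢
      induction h with
      | refl => exact Relation.ReflTransGen.refl
      | tail _ hbc ih => exact Relation.ReflTransGen.head (adjSwap_symm G hbc) ih,
    fun h h' => Relation.ReflTransGen.trans h h'⟩

/-- A word is `G`-reduced if between any two equal letters there is a letter distinct from
them and not adjacent to them. -/
def IsGReduced (G : SimpleGraph V) (w : List V) : Prop :=
  ∀ i j : Fin w.length, i < j → w.get i = w.get j →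
    ∃ k : Fin w.length, i < k ∧ k < j ∧ w.get k ≠ w.get i ∧ ¬ G.Adj (w.get k) (w.get i)

/-- The product `x_{w_1} ⋯ x_{w_ℓ}` depends only on the equivalence class of a word. -/
noncomputable def classProd (G : SimpleGraph V) (x : V → ℝ≥0∞) :
    Quotient (wordSetoid G) → ℝ≥0∞ :=
  Quotient.lift (fun w : List V => (w.map x).prod) (by
    intro a b h
    induction h with
    | refl => rfl
    | tail _ hs ih =>
        obtain ⟨a', b', u, v, huv, rfl, rfl⟩ := hs
        rw [ih]
        simp only [List.map_append, List.prod_append, List.map_cons, List.prod_cons]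
        ring)

/-- `tildeF G x` : the sum over all equivalence classes of words of `∏ x_{w_i}`,
valued in `[0,∞]`. -/
noncomputable def tildeF (G : SimpleGraph V) (x : V → ℝ) : ℝ≥0∞ :=
  ∑' c : Quotient (wordSetoid G), classProd G (fun v => ENNReal.ofReal (x v)) c

/-- `redF G x` : the sum over all equivalence classes of `G`-reduced words of `∏ x_{w_i}`,
valued in `[0,∞]`. -/
noncomputable def redF (G : SimpleGraph V) (x : V → ℝ) : ℝ≥0∞ :=
  ∑' c : {c : Quotient (wordSetoid G) // ∃ w, IsGReduced G w ∧ Quotient.mk (wordSetoid G) w = c},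
    classProd G (fun v => ENNReal.ofReal (x v)) c.1

/-- The clique polynomial `𝕶_{G,V'}(x) = ∑_{cliques K ⊆ V'} (-1)^{|K|} ∏_{v ∈ K} x_v`. -/
noncomputable def cliquePoly (G : SimpleGraph V) (V' : Finset V) (x : V → ℝ) : ℝ :=
  ∑ K ∈ V'.powerset.filter (fun K : Finset V => G.IsClique (K : Set V)),
    (-1 : ℝ) ^ K.card * ∏ v ∈ K, x v

/-- The Euclidean norm on `ℝ^V`. -/
noncomputable def eucNorm (x : V → ℝ) : ℝ := Real.sqrt (∑ v, x v ^ 2)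

/-- `min_{V' ⊆ V} 𝕶_{G,V'}(x)`. -/
noncomputable def minK (G : SimpleGraph V) (x : V → ℝ) : ℝ :=
  Finset.univ.inf' ⟨∅, Finset.mem_univ _⟩ fun V' : Finset V => cliquePoly G V' x

/-- `ρ(u) = inf {r ∈ [0,∞) : min_{V' ⊆ V} 𝕶_{G,V'}(r·u) = 0}`. -/
noncomputable def rho (G : SimpleGraph V) (u : V → ℝ) : ℝ :=
  sInf {r : ℝ | 0 ≤ r ∧ minK G (r • u) = 0}

/-- The region `R(G) = {x ∈ [0,1]^V : 𝕶_{G,V'}(x) > 0 for all V' ⊆ V}`. -/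
def regionR (G : SimpleGraph V) : Set (V → ℝ) :=
  {x | (∀ v, x v ∈ Set.Icc (0 : ℝ) 1) ∧ ∀ V' : Finset V, 0 < cliquePoly G V' x}


/-! Since the parts are completely joined, a clique of `G` inside `V'` is exactly a union of one
clique of `G` inside each `V' ∩ Vⱼ`, and the sign and monomial of `𝕶` are multiplicative over such
disjoint unions. So `𝕶_{G,V'}(x) = ∏ⱼ 𝕶_{G,V' ∩ Vⱼ}(x)`, which is positive once every factor is. -/

namespace SimpleGraph

noncomputable def cliquesIn (G : SimpleGraph V) (A : Finset V) : Finset (Finset V) :=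
  A.powerset.filter fun K : Finset V => G.IsClique (K : Set V)

theorem mem_cliquesIn {G : SimpleGraph V} {A K : Finset V} :
    K ∈ G.cliquesIn A ↔ K ⊆ A ∧ G.IsClique (K : Set V) := by
  rw [cliquesIn, Finset.mem_filter, Finset.mem_powerset]

theorem isClique_union_of_forall_adj {G : SimpleGraph V} {A B K L : Finset V}
    (hadj : ∀ a ∈ A, ∀ b ∈ B, G.Adj a b) (hKA : K ⊆ A) (hLB : L ⊆ B)
    (hK : G.IsClique (K : Set V)) (hL : G.IsClique (L : Set V)) :
    G.IsClique ((K ∪ L : Finset V) : Set V) := by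
  rw [Finset.coe_union, isClique_iff, Set.pairwise_union]
  refine ⟨hK, hL, fun a ha b hb _ => ?_⟩
  have hab : G.Adj a b := hadj a (hKA ha) b (hLB hb)
  exact ⟨hab, hab.symm⟩

end SimpleGraph

theorem cliquePoly_eq_sum_cliquesIn (G : SimpleGraph V) (A : Finset V) (x : V → ℝ) :
    cliquePoly G A x = ∑ K ∈ G.cliquesIn A, (-1 : ℝ) ^ K.card * ∏ v ∈ K, x v :=
  rfl

theorem cliquePoly_empty (G : SimpleGraph V) (x : V → ℝ) : cliquePoly G ∅ x = 1 := by
  rw [cliquePoly, Finset.powerset_empty, Finset.filter_singleton, if_pos (by simp)]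
  simp

theorem cliquePoly_union_of_forall_adj (G : SimpleGraph V) {A B : Finset V} (hAB : Disjoint A B)
    (hadj : ∀ a ∈ A, ∀ b ∈ B, G.Adj a b) (x : V → ℝ) :
    cliquePoly G (A ∪ B) x = cliquePoly G A x * cliquePoly G B x := by
  simp only [cliquePoly_eq_sum_cliquesIn, Finset.sum_mul_sum, ← Finset.sum_product']
  symm
  refine Finset.sum_nbij' (fun p => p.1 ∪ p.2) (fun K => (K ∩ A, K ∩ B)) ?_ ?_ ?_ ?_ ?_
  · rintro ⟨K, L⟩ hp
    simp only [Finset.mem_product, SimpleGraph.mem_cliquesIn] at hp ⊢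
    exact ⟨Finset.union_subset_union hp.1.1 hp.2.1,
      SimpleGraph.isClique_union_of_forall_adj hadj hp.1.1 hp.2.1 hp.1.2 hp.2.2⟩
  · intro K hK
    simp only [Finset.mem_product, SimpleGraph.mem_cliquesIn] at hK ⊢
    exact ⟨⟨Finset.inter_subset_right, hK.2.subset Finset.inter_subset_left⟩,
      ⟨Finset.inter_subset_right, hK.2.subset Finset.inter_subset_left⟩⟩
  · rintro ⟨K, L⟩ hp
    simp only [Finset.mem_product, SimpleGraph.mem_cliquesIn] at hp
    have hLA : L ∩ A = ∅ := Finset.disjoint_iff_inter_eq_empty.1 (hAB.symm.mono_left hp.2.1)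
    have hKB : K ∩ B = ∅ := Finset.disjoint_iff_inter_eq_empty.1 (hAB.mono_left hp.1.1)
    simp only [Finset.union_inter_distrib_right, Finset.inter_eq_left.2 hp.1.1,
      Finset.inter_eq_left.2 hp.2.1, hLA, hKB, Finset.union_empty, Finset.empty_union]
  · intro K hK
    rw [SimpleGraph.mem_cliquesIn] at hK
    simp only [← Finset.inter_union_distrib_left, Finset.inter_eq_left.2 hK.1]
  · rintro ⟨K, L⟩ hp
    simp only [Finset.mem_product, SimpleGraph.mem_cliquesIn] at hp
    have hKL : Disjoint K L := hAB.mono hp.1.1 hp.2.1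
    rw [Finset.card_union_of_disjoint hKL, Finset.prod_union hKL, pow_add]
    ring

theorem cliquePoly_biUnion {ι : Type*} (G : SimpleGraph V) (s : Finset ι) (Vs : ι → Finset V)
    (hdisj : (s : Set ι).PairwiseDisjoint Vs)
    (hadj : ∀ i ∈ s, ∀ j ∈ s, i ≠ j → ∀ a ∈ Vs i, ∀ b ∈ Vs j, G.Adj a b) (x : V → ℝ) :
    cliquePoly G (s.biUnion Vs) x = ∏ i ∈ s, cliquePoly G (Vs i) x := by
  induction s using Finset.induction_on with
  | empty => simp [cliquePoly_empty]
  | insert i s hi ih =>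
    have hne : ∀ j ∈ s, i ≠ j := fun j hj hij => hi (hij ▸ hj)
    rw [Finset.biUnion_insert, Finset.prod_insert hi, cliquePoly_union_of_forall_adj G ?disj ?adj x,
      ih (hdisj.subset (by simp)) ?adjs]
    case disj =>
      exact (Finset.disjoint_biUnion_right _ _ _).2 fun j hj =>
        hdisj (by simp) (by simp [hj]) (hne j hj)
    case adj =>
      intro a ha b hb
      obtain ⟨j, hj, hbj⟩ := Finset.mem_biUnion.1 hb
      exact hadj i (by simp) j (by simp [hj]) (hne j hj) a ha b hbj
    case adjs =>
      exact fun j hj l hl => hadj j (by simp [hj]) l (by simp [hl])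

theorem regionR_join_general (G : SimpleGraph V) (k : ℕ) (Vs : Fin k → Finset V)
    (hdisj : ∀ i j, i ≠ j → Disjoint (Vs i) (Vs j))
    (hcover : ∀ v : V, ∃ j, v ∈ Vs j)
    (hadj : ∀ i j, i ≠ j → ∀ a ∈ Vs i, ∀ b ∈ Vs j, G.Adj a b)
    (x : V → ℝ) (hx : ∀ v, x v ∈ Set.Icc (0 : ℝ) 1) :
    x ∈ regionR G ↔ ∀ j : Fin k, ∀ V' ⊆ Vs j, 0 < cliquePoly G V' x := by
  refine ⟨fun h j V' _ => h.2 V', fun h => ⟨hx, fun V' => ?_⟩⟩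
  have hV' : V' = Finset.univ.biUnion fun j => V' ∩ Vs j := by
    ext v
    simpa using fun _ => hcover v
  rw [hV', cliquePoly_biUnion G _ _
    (fun i _ j _ hij => (hdisj i j hij).mono Finset.inter_subset_right Finset.inter_subset_right)
    (fun i _ j _ hij a ha b hb => hadj i j hij a (Finset.mem_of_mem_inter_right ha) b
      (Finset.mem_of_mem_inter_right hb))]
  exact Finset.prod_pos fun j _ => h j _ Finset.inter_subset_right

/-- Lemma 4.7, second claim: if `V = V_1 ⊔ ⋯ ⊔ V_k` with complete adjacency
between distinct parts, then `R(G)` is the product of the regions of the induced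
subgraphs: `x ∈ R(G)` iff `𝕶_{G,V'}(x) > 0` for every `j` and every `V' ⊆ V_j`. -/
theorem regionR_join (G : SimpleGraph V) (k : ℕ) (Vs : Fin k → Finset V)
    (hne : ∀ j, (Vs j).Nonempty)
    (hdisj : ∀ i j, i ≠ j → Disjoint (Vs i) (Vs j))
    (hcover : ∀ v : V, ∃ j, v ∈ Vs j)
    (hadj : ∀ i j, i ≠ j → ∀ a ∈ Vs i, ∀ b ∈ Vs j, G.Adj a b)
    (x : V → ℝ) (hx : ∀ v, x v ∈ Set.Icc (0 : ℝ) 1) :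
    x ∈ regionR G ↔ ∀ j : Fin k, ∀ V' ⊆ Vs j, 0 < cliquePoly G V' x :=
  regionR_join_general G k Vs hdisj hcover hadj x hx
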